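/- Let N ≥ 2, R > 0, g : ℝ → ℝ locally Lipschitz continuous, and let u be a large solution of −Δu + g(u) = 0 in B_R(0) satisfying (i) ∂u/∂r(x) → +∞ as |x| → R and (ii) |∇_τ u(x)| = o(∂u/∂r(x)) as |x| → R. Then for every boundary point P ∈ ∂B_R(0) with first coordinate P₁ > 0, there exists δ ∈ (0, R) such that ∂u/∂x₁(x) > 0 for all x ∈ B_R(0) ∩ B_δ(P). -/

import Mathlib

/-
Split the gradient into its tangential and radial parts:
`∂u/∂x₁ = ⟨∇_τ u, e₁⟩ + (∂u/∂r) x₁/|x|`. Near a boundary point `P` with `P₁ > 0` the factor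
`x₁/|x|` stays above `P₁/(2R)`, while `|∇_τ u| ≤ ε ∂u/∂r` with `∂u/∂r > 0` once `|x|` is close
to `R`. Taking `ε = P₁/(2R)` the radial term dominates, so `∂u/∂x₁ > 0`.
-/

open Metric Set MeasureTheory

/-- The Laplacian of `u : ℝ^N → ℝ`, as the sum of second partial derivatives. -/
noncomputable def lapl {N : ℕ} (u : EuclideanSpace ℝ (Fin N) → ℝ)
    (x : EuclideanSpace ℝ (Fin N)) : ℝ :=
  ∑ i : Fin N, fderiv ℝ (fderiv ℝ u) x (EuclideanSpace.single i 1) (EuclideanSpace.single i 1)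

/-- The radial derivative `∂u/∂r(x) = ⟨Du(x), x/|x|⟩`. -/
noncomputable def radialDeriv {N : ℕ} (u : EuclideanSpace ℝ (Fin N) → ℝ)
    (x : EuclideanSpace ℝ (Fin N)) : ℝ :=
  (inner ℝ (gradient u x) ((‖x‖)⁻¹ • x) : ℝ)

/-- The tangential gradient `∇_τ u(x) = Du(x) − |x|⁻²⟨Du(x), x⟩ x`. -/
noncomputable def tangentialGrad {N : ℕ} (u : EuclideanSpace ℝ (Fin N) → ℝ)
    (x : EuclideanSpace ℝ (Fin N)) : EuclideanSpace ℝ (Fin N) :=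
  gradient u x - ((‖x‖ ^ 2)⁻¹ * (inner ℝ (gradient u x) x : ℝ)) • x

/-- `u` is a large solution of `−Δu + g(u) = 0` in the ball `B_R(0)`:
`u ∈ C²(B_R(0))`, `Δu = g(u)` in `B_R(0)`, and `u(x) → +∞` as `|x| → R`. -/
def IsLargeSolution {N : ℕ} (g : ℝ → ℝ) (R : ℝ)
    (u : EuclideanSpace ℝ (Fin N) → ℝ) : Prop :=
  ContDiffOn ℝ 2 u (ball (0 : EuclideanSpace ℝ (Fin N)) R) ∧
  (∀ x ∈ ball (0 : EuclideanSpace ℝ (Fin N)) R, lapl u x = g (u x)) ∧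
  (∀ M : ℝ, ∃ ρ ∈ Ico (0 : ℝ) R, ∀ x ∈ ball (0 : EuclideanSpace ℝ (Fin N)) R,
    ρ < ‖x‖ → M < u x)

/-- The Keller–Osserman condition: `g` is nondecreasing on `[a,∞)` and
`∫_a^∞ ds/√(G(s)) < ∞` where `G(s) = ∫_a^s g(σ) dσ`. -/
def KellerOsserman (g : ℝ → ℝ) (a : ℝ) : Prop :=
  MonotoneOn g (Ici a) ∧
  IntegrableOn (fun s => 1 / Real.sqrt (∫ t in a..s, g t)) (Ici a)

open scoped RealInnerProductSpace

lemma lt_inner_div_norm_of_norm_sub_mul_lt {E : Type*} [NormedAddCommGroup E]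
    [InnerProductSpace ℝ E] {P x v : E} (hx₀ : 0 < ‖x‖) (hxP : ‖x‖ < ‖P‖)
    (hclose : ‖x - P‖ * ‖v‖ < ⟪P, v⟫ / 2) :
    ⟪P, v⟫ / (2 * ‖P‖) < ⟪x, v⟫ / ‖x‖ := by
  have hdiff : ⟪P, v⟫ - ⟪x, v⟫ ≤ ‖x - P‖ * ‖v‖ := by
    rw [← inner_sub_left, norm_sub_rev]
    exact real_inner_le_norm _ _
  have hxv : ⟪P, v⟫ / 2 < ⟪x, v⟫ := by linarith
  have hPv : 0 < ⟪P, v⟫ := by nlinarith [norm_nonneg (x - P), norm_nonneg v]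
  calc ⟪P, v⟫ / (2 * ‖P‖) = (⟪P, v⟫ / 2) / ‖P‖ := by ring
    _ < ⟪x, v⟫ / ‖P‖ := by gcongr; linarith
    _ < ⟪x, v⟫ / ‖x‖ := by gcongr; linarith

section

variable {N : ℕ} {u : EuclideanSpace ℝ (Fin N) → ℝ}

lemma fderiv_apply_eq_inner_tangentialGrad_add (x v : EuclideanSpace ℝ (Fin N)) :
    fderiv ℝ u x v = ⟪tangentialGrad u x, v⟫ + radialDeriv u x * (⟪x, v⟫ / ‖x‖) := by
  rw [← toDual_gradient, InnerProductSpace.toDual_apply_apply, tangentialGrad, radialDeriv,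
    inner_sub_left, real_inner_smul_left, real_inner_smul_right]
  ring

lemma fderiv_apply_pos_of_norm_tangentialGrad_le {x v : EuclideanSpace ℝ (Fin N)} {ε : ℝ}
    (hrad : 0 < radialDeriv u x) (htan : ‖tangentialGrad u x‖ ≤ ε * radialDeriv u x)
    (hε : ε * ‖v‖ < ⟪x, v⟫ / ‖x‖) :
    0 < fderiv ℝ u x v := by
  have htv : -(ε * radialDeriv u x * ‖v‖) ≤ ⟪tangentialGrad u x, v⟫ := by
    have := neg_le_of_abs_le (abs_real_inner_le_norm (tangentialGrad u x) v)
    nlinarith [norm_nonneg v]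
  rw [fderiv_apply_eq_inner_tangentialGrad_add]
  nlinarith [mul_lt_mul_of_pos_left hε hrad]

theorem exists_fderiv_apply_pos_near_boundary {P v : EuclideanSpace ℝ (Fin N)}
    (hPv : 0 < ⟪P, v⟫)
    (hrad : ∃ ρ ∈ Ico (0 : ℝ) ‖P‖, ∀ x ∈ ball (0 : EuclideanSpace ℝ (Fin N)) ‖P‖,
      ρ < ‖x‖ → 0 < radialDeriv u x)
    (htan : ∀ ε > (0 : ℝ), ∃ ρ ∈ Ico (0 : ℝ) ‖P‖, ∀ x ∈ ball (0 : EuclideanSpace ℝ (Fin N)) ‖P‖,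
      ρ < ‖x‖ → ‖tangentialGrad u x‖ ≤ ε * radialDeriv u x) :
    ∃ δ ∈ Ioo (0 : ℝ) ‖P‖, ∀ x ∈ ball (0 : EuclideanSpace ℝ (Fin N)) ‖P‖ ∩ ball P δ,
      0 < fderiv ℝ u x v := by
  have hPv_le : ⟪P, v⟫ ≤ ‖P‖ * ‖v‖ := real_inner_le_norm P v
  have hP : 0 < ‖P‖ := by nlinarith [norm_nonneg P, norm_nonneg v]
  have hv : 0 < ‖v‖ := by nlinarith [norm_nonneg P, norm_nonneg v]
  set ε := ⟪P, v⟫ / (2 * ‖P‖ * ‖v‖)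
  obtain ⟨ρ₁, ⟨hρ₁, hρ₁P⟩, hpos⟩ := hrad
  obtain ⟨ρ₂, ⟨-, hρ₂P⟩, hsmall⟩ := htan ε (by positivity)
  have hρ : max ρ₁ ρ₂ < ‖P‖ := max_lt hρ₁P hρ₂P
  refine ⟨min (⟪P, v⟫ / (2 * ‖v‖)) (‖P‖ - max ρ₁ ρ₂), ⟨?_, ?_⟩, ?_⟩
  · exact lt_min (by positivity) (by linarith)
  · refine (min_le_left _ _).trans_lt ?_
    rw [div_lt_iff₀ (by positivity)]
    linarith
  rintro x ⟨hx, hxP⟩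
  rw [mem_ball_zero_iff] at hx
  rw [mem_ball, dist_eq_norm, lt_min_iff] at hxP
  have hx_ann : max ρ₁ ρ₂ < ‖x‖ := by
    linarith [norm_sub_norm_le P x, norm_sub_rev P x]
  have hclose : ‖x - P‖ * ‖v‖ < ⟪P, v⟫ / 2 := by
    have := hxP.1
    rw [lt_div_iff₀ (by positivity)] at this
    linarith
  apply fderiv_apply_pos_of_norm_tangentialGrad_le (ε := ε)
    (hpos x (mem_ball_zero_iff.2 hx) ((le_max_left _ _).trans_lt hx_ann))
    (hsmall x (mem_ball_zero_iff.2 hx) ((le_max_right _ _).trans_lt hx_ann))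
  calc ε * ‖v‖ = ⟪P, v⟫ / (2 * ‖P‖) := by simp only [ε]; field_simp
    _ < ⟪x, v⟫ / ‖x‖ :=
      lt_inner_div_norm_of_norm_sub_mul_lt (hρ₁.trans_lt ((le_max_left _ _).trans_lt hx_ann))
        hx hclose

end

theorem stmt_4 {N : ℕ} (hN : 2 ≤ N) (R : ℝ)
    (u : EuclideanSpace ℝ (Fin N) → ℝ)
    (hrad : ∀ M : ℝ, ∃ ρ ∈ Ico (0 : ℝ) R, ∀ x ∈ ball (0 : EuclideanSpace ℝ (Fin N)) R,
      ρ < ‖x‖ → M < radialDeriv u x)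
    (htan : ∀ ε > (0 : ℝ), ∃ ρ ∈ Ico (0 : ℝ) R, ∀ x ∈ ball (0 : EuclideanSpace ℝ (Fin N)) R,
      ρ < ‖x‖ → ‖tangentialGrad u x‖ ≤ ε * radialDeriv u x) :
    ∀ P : EuclideanSpace ℝ (Fin N), ‖P‖ = R → 0 < P ⟨0, by omega⟩ →
      ∃ δ ∈ Ioo (0 : ℝ) R, ∀ x ∈ ball (0 : EuclideanSpace ℝ (Fin N)) R ∩ ball P δ,
        0 < fderiv ℝ u x (EuclideanSpace.single (⟨0, by omega⟩ : Fin N) 1) := by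
  rintro P rfl hP₁
  have hPe₁ : 0 < ⟪P, EuclideanSpace.single (⟨0, by omega⟩ : Fin N) 1⟫ := by
    simpa [EuclideanSpace.inner_single_right] using hP₁
  exact exists_fderiv_apply_pos_near_boundary hPe₁ (hrad 0) htan
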